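/- arXiv:1705.04974 — 4 statements merged into one kernel-verified Lean document; each statement's English description precedes it below -/
import Mathlib

section
/- Let W be a positive random variable that is unimodal at 0 (its cdf is concave on (0,∞) with F(0)=0), and let Q_1, ..., Q_n be exchangeable positive random variables independent of W. Then for any real n-vectors a, b with nonnegative entries such that a is majorized by b, the random variable W / (sum_l a_l Q_l) is stochastically smaller than W / (sum_l b_l Q_l), i.e., P[W / (sum_l a_l Q_l) > t] <= P[W / (sum_l b_l Q_l) > t] for all real t. -/
/-!
Write `S_c = ∑ cᵢ Qᵢ` and `F` for the cdf of `W`. For `t > 0`, conditioning on `Q`, which is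
independent of `W`, gives `P[W / S_c > t] = 1 - E F(t S_c)`, so it suffices that
`φ(c) = E F(t S_c)` satisfies `φ b ≤ φ a`. On weights with positive total, `φ` is concave (`F` is
concave on `(0, ∞)` and `S_c > 0` is linear in `c`) and invariant under permuting `c`
(exchangeability). Majorization puts `a` in the convex hull of the permutations of `b`: by
Hahn–Banach this amounts to `y ⬝ a ≤ max_σ y ⬝ (b ∘ σ)` for every `y`, which follows from the
rearrangement inequality and Abel summation. The minimum principle for concave functions on a
convex hull then gives `φ b ≤ φ a`. For `t ≤ 0` the right-hand side is `1`, as `W, S_b > 0`.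
-/

open Finset

/-- `a` is majorized by `b`: the total sums agree and, after rearranging each vector
in non-increasing order, every partial sum of `a` is at most the corresponding
partial sum of `b`. -/
def IsMajorizedBy {n : ℕ} (a b : Fin n → ℝ) : Prop :=
  (∑ i, a i = ∑ i, b i) ∧
  ∀ σ τ : Equiv.Perm (Fin n), Antitone (a ∘ σ) → Antitone (b ∘ τ) →
    ∀ r : ℕ,
      ∑ i ∈ Finset.univ.filter (fun i : Fin n => (i : ℕ) < r), a (σ i) ≤
        ∑ i ∈ Finset.univ.filter (fun i : Fin n => (i : ℕ) < r), b (τ i)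

open MeasureTheory ProbabilityTheory

section Majorization

variable {n : ℕ}

def prefixSum (a : Fin n → ℝ) (r : ℕ) : ℝ :=
  ∑ i ∈ univ.filter (fun i : Fin n => (i : ℕ) < r), a i

lemma prefixSum_zero (a : Fin n → ℝ) : prefixSum a 0 = 0 := by
  simp [prefixSum]

lemma prefixSum_of_le (a : Fin n → ℝ) {r : ℕ} (hr : n ≤ r) : prefixSum a r = ∑ i, a i := by
  rw [prefixSum, filter_true_of_mem fun i _ => i.isLt.trans_le hr]

lemma prefixSum_succ (a : Fin n → ℝ) (i : Fin n) : prefixSum a (i + 1) = prefixSum a i + a i := by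
  have : univ.filter (fun j : Fin n => (j : ℕ) < i + 1)
      = insert i (univ.filter fun j : Fin n => (j : ℕ) < i) := by
    ext j
    simp [le_iff_eq_or_lt, Fin.ext_iff]
  rw [prefixSum, this, sum_insert (by simp), add_comm]
  rfl

lemma prefixSum_sub (a c : Fin n → ℝ) (r : ℕ) :
    prefixSum (c - a) r = prefixSum c r - prefixSum a r :=
  sum_sub_distrib ..

theorem exists_perm_antitone_comp (a : Fin n → ℝ) :
    ∃ σ : Equiv.Perm (Fin n), Antitone (a ∘ σ) :=
  ⟨Tuple.sort (-a), fun _ _ h => neg_le_neg_iff.1 (Tuple.monotone_sort (-a) h)⟩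

theorem dotProduct_nonneg_of_prefixSum_nonneg {y d : Fin n → ℝ} (hy : Antitone y)
    (hd : ∀ r, 0 ≤ prefixSum d r) (htot : ∑ i, d i = 0) : 0 ≤ y ⬝ᵥ d := by
  cases n with
  | zero => simp
  | succ m =>
    -- Abel summation, with `d i = prefixSum d (i + 1) - prefixSum d i`
    have hsplit : y ⬝ᵥ d = ∑ j : Fin m, (y j.castSucc - y j.succ) * prefixSum d (j + 1)
        + y (Fin.last m) * prefixSum d (m + 1) - y 0 * prefixSum d 0 := by
      have : y ⬝ᵥ d = ∑ i, y i * prefixSum d (i + 1) - ∑ i, y i * prefixSum d i := by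
        simp only [dotProduct, prefixSum_succ, ← sum_sub_distrib]
        ring_nf
      rw [this, Fin.sum_univ_castSucc, Fin.sum_univ_succ]
      simp only [Fin.val_castSucc, Fin.val_succ, Fin.val_last, Fin.val_zero, sub_mul,
        sum_sub_distrib]
      ring
    rw [hsplit, prefixSum_of_le d le_rfl, htot, prefixSum_zero]
    simp only [mul_zero, add_zero, sub_zero]
    exact sum_nonneg fun j _ =>
      mul_nonneg (sub_nonneg.2 (hy Fin.castSucc_lt_succ.le)) (hd _)

theorem dotProduct_le_dotProduct_of_prefixSum_le {y a c : Fin n → ℝ} (hy : Antitone y)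
    (hpre : ∀ r, prefixSum a r ≤ prefixSum c r) (htot : ∑ i, a i = ∑ i, c i) :
    y ⬝ᵥ a ≤ y ⬝ᵥ c := by
  have := dotProduct_nonneg_of_prefixSum_nonneg hy
    (fun r => (prefixSum_sub a c r).symm ▸ sub_nonneg.2 (hpre r))
    (by simp [sum_sub_distrib, htot])
  rwa [dotProduct_sub, sub_nonneg] at this

theorem IsMajorizedBy.exists_perm_dotProduct_le {a b : Fin n → ℝ} (h : IsMajorizedBy a b)
    (y : Fin n → ℝ) : ∃ σ : Equiv.Perm (Fin n), y ⬝ᵥ a ≤ y ⬝ᵥ (b ∘ σ) := by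
  obtain ⟨α, hα⟩ := exists_perm_antitone_comp a
  obtain ⟨β, hβ⟩ := exists_perm_antitone_comp b
  obtain ⟨ρ, hρ⟩ := exists_perm_antitone_comp y
  refine ⟨β * ρ⁻¹, ?_⟩
  calc y ⬝ᵥ a = (y ∘ ρ) ⬝ᵥ ((a ∘ α) ∘ ⇑(α⁻¹ * ρ)) := by
        rw [← comp_equiv_dotProduct_comp_equiv y a ρ]
        congr 1
        ext i
        simp
    _ ≤ (y ∘ ρ) ⬝ᵥ (a ∘ α) := (hρ.monovary hα).sum_mul_comp_perm_le_sum_mul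
    _ ≤ (y ∘ ρ) ⬝ᵥ (b ∘ β) := dotProduct_le_dotProduct_of_prefixSum_le hρ (h.2 α β hα hβ)
        (by simp only [Function.comp_apply, Equiv.sum_comp, h.1])
    _ = y ⬝ᵥ (b ∘ ⇑(β * ρ⁻¹)) := by
        rw [← dotProduct_comp_equiv_symm]
        rfl

theorem IsMajorizedBy.mem_convexHull {a b : Fin n → ℝ} (h : IsMajorizedBy a b) :
    a ∈ convexHull ℝ (Set.range fun σ : Equiv.Perm (Fin n) => b ∘ σ) := by
  by_contra ha
  obtain ⟨f, u, hf_hull, hf_a⟩ := geometric_hahn_banach_closed_point (convex_convexHull ℝ _)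
    ((Set.finite_range _).isCompact_convexHull ℝ).isClosed ha
  set y : Fin n → ℝ := fun i => f fun j => if i = j then 1 else 0
  have hf : ∀ x, f x = y ⬝ᵥ x := fun x => by
    rw [dotProduct_comm]
    exact f.toLinearMap.pi_apply_eq_sum_univ x
  obtain ⟨σ, hσ⟩ := h.exists_perm_dotProduct_le y
  have := hf_hull _ (subset_convexHull ℝ _ ⟨σ, rfl⟩)
  rw [hf] at this hf_a
  linarith

theorem IsMajorizedBy.eq_of_sum_eq_zero {a b : Fin n → ℝ} (hab : IsMajorizedBy a b)
    (ha : ∀ i, 0 ≤ a i) (hb : ∀ i, 0 ≤ b i) (h0 : ∑ i, a i = 0) : a = b := by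
  have hb0 : ∑ i, b i = 0 := hab.1 ▸ h0
  funext i
  rw [(sum_eq_zero_iff_of_nonneg fun i _ => ha i).1 h0 i (mem_univ i),
    (sum_eq_zero_iff_of_nonneg fun i _ => hb i).1 hb0 i (mem_univ i)]

theorem ConcaveOn.le_of_isMajorizedBy {s : Set (Fin n → ℝ)} {φ : (Fin n → ℝ) → ℝ}
    {a b : Fin n → ℝ} (hφ : ConcaveOn ℝ s φ) (hb : ∀ σ : Equiv.Perm (Fin n), b ∘ σ ∈ s)
    (hφb : ∀ σ : Equiv.Perm (Fin n), φ (b ∘ σ) = φ b) (hab : IsMajorizedBy a b) : φ b ≤ φ a := by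
  obtain ⟨_, ⟨σ, rfl⟩, hσ⟩ :=
    hφ.exists_le_of_mem_convexHull (Set.range_subset_iff.2 hb) hab.mem_convexHull
  rwa [hφb] at hσ

end Majorization

section WeightedSums

variable {n : ℕ}

def positiveWeights (n : ℕ) : Set (Fin n → ℝ) := {c | (∀ i, 0 ≤ c i) ∧ 0 < ∑ i, c i}

theorem convex_positiveWeights : Convex ℝ (positiveWeights n) := by
  intro c hc d hd a b ha hb hab
  refine ⟨fun i => ?_, ?_⟩
  · simp only [Pi.add_apply, Pi.smul_apply, smul_eq_mul]
    exact add_nonneg (mul_nonneg ha (hc.1 i)) (mul_nonneg hb (hd.1 i))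
  · simp only [Pi.add_apply, Pi.smul_apply, smul_eq_mul, sum_add_distrib, ← mul_sum]
    rcases ha.eq_or_lt with rfl | ha'
    · simp only [zero_add] at hab
      simp [hab, hd.2]
    · exact add_pos_of_pos_of_nonneg (mul_pos ha' hc.2) (mul_nonneg hb hd.2.le)

theorem dotProduct_pos_of_mem_positiveWeights {c q : Fin n → ℝ} (hc : c ∈ positiveWeights n)
    (hq : ∀ i, 0 < q i) : 0 < c ⬝ᵥ q := by
  obtain ⟨i, -, hi⟩ := exists_lt_of_sum_lt (by simpa using hc.2 : ∑ _ : Fin n, (0 : ℝ) < ∑ i, c i)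
  exact sum_pos' (fun j _ => mul_nonneg (hc.1 j) (hq j).le) ⟨i, mem_univ i, mul_pos hi (hq i)⟩

theorem ConcaveOn.comp_dotProduct_of_pos {F : ℝ → ℝ} (hF : ConcaveOn ℝ (Set.Ioi 0) F)
    {q : Fin n → ℝ} (hq : ∀ i, 0 < q i) :
    ConcaveOn ℝ (positiveWeights n) fun c => F (c ⬝ᵥ q) := by
  refine ⟨convex_positiveWeights, fun c hc d hd a b ha hb hab => ?_⟩
  simpa only [add_dotProduct, smul_dotProduct] using
    hF.2 (dotProduct_pos_of_mem_positiveWeights hc hq)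
      (dotProduct_pos_of_mem_positiveWeights hd hq) ha hb hab

theorem concaveOn_integral {E α : Type*} [AddCommGroup E] [Module ℝ E] [MeasurableSpace α]
    {μ : Measure α} {s : Set E} {φ : E → α → ℝ} (hs : Convex ℝ s)
    (hφ : ∀ᵐ q ∂μ, ConcaveOn ℝ s (φ · q)) (hint : ∀ x ∈ s, Integrable (φ x) μ) :
    ConcaveOn ℝ s fun x => ∫ q, φ x q ∂μ := by
  refine ⟨hs, fun x hx y hy a b ha hb hab => ?_⟩
  simp only [smul_eq_mul, ← integral_const_mul]
  rw [← integral_add ((hint x hx).const_mul a) ((hint y hy).const_mul b)]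
  refine integral_mono_ae (((hint x hx).const_mul a).add ((hint y hy).const_mul b))
    (hint _ (hs hx hy ha hb hab)) ?_
  filter_upwards [hφ] with q hq
  exact hq.2 hx hy ha hb hab

theorem integral_comp_dotProduct_comp_perm {Ω : Type*} [MeasurableSpace Ω] {P : Measure Ω}
    {X : Ω → Fin n → ℝ} (hX : Measurable X)
    (hexch : ∀ e : Equiv.Perm (Fin n), P.map (fun ω => X ω ∘ e) = P.map X)
    {G : ℝ → ℝ} (hG : Measurable G) (c : Fin n → ℝ) (σ : Equiv.Perm (Fin n)) :
    ∫ ω, G ((c ∘ σ) ⬝ᵥ X ω) ∂P = ∫ ω, G (c ⬝ᵥ X ω) ∂P := by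
  have hGc : Measurable fun x : Fin n → ℝ => G (c ⬝ᵥ x) :=
    hG.comp (Finset.measurable_sum _ fun i _ => measurable_const.mul (measurable_pi_apply i))
  have hXσ : Measurable fun ω => X ω ∘ σ.symm :=
    measurable_pi_lambda _ fun i => (measurable_pi_apply _).comp hX
  simp_rw [← dotProduct_comp_equiv_symm]
  rw [← integral_map hXσ.aemeasurable hGc.aestronglyMeasurable, hexch,
    integral_map hX.aemeasurable hGc.aestronglyMeasurable]

theorem ProbabilityTheory.IndepFun.measure_preimage_eq_lintegral {Ω α β : Type*}
    [MeasurableSpace Ω] [MeasurableSpace α] [MeasurableSpace β] {P : Measure Ω}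
    [IsFiniteMeasure P] {X : Ω → α} {Y : Ω → β} (hXY : IndepFun X Y P) (hX : Measurable X)
    (hY : Measurable Y) {s : Set (α × β)} (hs : MeasurableSet s) :
    P ((fun ω => (X ω, Y ω)) ⁻¹' s) = ∫⁻ ω, P (Y ⁻¹' (Prod.mk (X ω) ⁻¹' s)) ∂P := by
  rw [← Measure.map_apply (hX.prodMk hY) hs,
    hXY.map_prod_eq_prod_map_map hX.aemeasurable hY.aemeasurable, Measure.prod_apply hs,
    lintegral_map (measurable_measure_prodMk_left hs) hX]
  refine lintegral_congr fun ω => ?_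
  exact Measure.map_apply hY (measurable_prodMk_left hs)

theorem monotone_toReal_measure_le {Ω : Type*} [MeasurableSpace Ω] (P : Measure Ω)
    [IsFiniteMeasure P] (W : Ω → ℝ) : Monotone fun s => (P {ω | W ω ≤ s}).toReal := fun _ _ h =>
  ENNReal.toReal_mono (measure_ne_top _ _) (measure_mono fun _ hω => le_trans hω h)

end WeightedSums

section Ordering

variable {Ω : Type*} [MeasurableSpace Ω] {P : Measure Ω} [IsProbabilityMeasure P] {n : ℕ}
  {W : Ω → ℝ} {X : Ω → Fin n → ℝ}

theorem integrable_toReal_measure_le_comp (W : Ω → ℝ) {g : Ω → ℝ} (hg : Measurable g) :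
    Integrable (fun ω => (P {ω' | W ω' ≤ g ω}).toReal) P := by
  refine .of_bound ((monotone_toReal_measure_le P W).measurable.comp hg).aestronglyMeasurable 1
    (.of_forall fun ω => ?_)
  rw [Real.norm_of_nonneg ENNReal.toReal_nonneg]
  exact measureReal_le_one

theorem measurable_mul_dotProduct (t : ℝ) (c : Fin n → ℝ) :
    Measurable fun x : Fin n → ℝ => t * c ⬝ᵥ x :=
  measurable_const.mul
    (Finset.measurable_sum _ fun i _ => measurable_const.mul (measurable_pi_apply i))

theorem measure_lt_div_dotProduct_eq_one_sub_integral (hW : Measurable W) (hX : Measurable X)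
    (hWX : IndepFun W X P) (hXpos : ∀ᵐ ω ∂P, ∀ i, 0 < X ω i) {c : Fin n → ℝ}
    (hc : c ∈ positiveWeights n) (t : ℝ) :
    P {ω | t < W ω / c ⬝ᵥ X ω} =
      1 - ENNReal.ofReal (∫ ω, (P {ω' | W ω' ≤ t * c ⬝ᵥ X ω}).toReal ∂P) := by
  have hE : MeasurableSet {p : (Fin n → ℝ) × ℝ | p.2 ≤ t * c ⬝ᵥ p.1} :=
    measurableSet_le measurable_snd ((measurable_mul_dotProduct t c).comp measurable_fst)
  have hcompl : ({ω | t < W ω / c ⬝ᵥ X ω} : Set Ω) =ᵐ[P]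
      ({ω | W ω ≤ t * c ⬝ᵥ X ω}ᶜ : Set Ω) := by
    filter_upwards [hXpos] with ω hω
    exact propext
      ((lt_div_iff₀ (dotProduct_pos_of_mem_positiveWeights hc hω)).trans not_le.symm)
  have hfreeze : P {ω | W ω ≤ t * c ⬝ᵥ X ω} = ∫⁻ ω, P {ω' | W ω' ≤ t * c ⬝ᵥ X ω} ∂P :=
    hWX.symm.measure_preimage_eq_lintegral hX hW hE
  have hint : Integrable (fun ω => (P {ω' | W ω' ≤ t * c ⬝ᵥ X ω}).toReal) P :=
    integrable_toReal_measure_le_comp W ((measurable_mul_dotProduct t c).comp hX)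
  rw [measure_congr hcompl, prob_compl_eq_one_sub (s := {ω | W ω ≤ t * c ⬝ᵥ X ω})
    (hE.preimage (hX.prodMk hW)), hfreeze,
    ofReal_integral_eq_lintegral_ofReal hint (.of_forall fun ω => ENNReal.toReal_nonneg)]
  simp only [ENNReal.ofReal_toReal (measure_ne_top _ _)]

theorem measure_lt_div_dotProduct_eq_one (hW : ∀ᵐ ω ∂P, 0 < W ω)
    (hXpos : ∀ᵐ ω ∂P, ∀ i, 0 < X ω i) {c : Fin n → ℝ} (hc : c ∈ positiveWeights n) {t : ℝ}
    (ht : t ≤ 0) : P {ω | t < W ω / c ⬝ᵥ X ω} = 1 := by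
  have hfull : ∀ᵐ ω ∂P, t < W ω / c ⬝ᵥ X ω := by
    filter_upwards [hW, hXpos] with ω hWω hXω
    exact ht.trans_lt (div_pos hWω (dotProduct_pos_of_mem_positiveWeights hc hXω))
  rw [measure_congr (ae_eq_univ.2 (mem_ae_iff.1 hfull)), measure_univ]

theorem concaveOn_integral_measure_le_mul_dotProduct
    (hF : ConcaveOn ℝ (Set.Ioi 0) fun s => (P {ω | W ω ≤ s}).toReal) (hX : Measurable X)
    (hXpos : ∀ᵐ ω ∂P, ∀ i, 0 < X ω i) {t : ℝ} (ht : 0 < t) :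
    ConcaveOn ℝ (positiveWeights n) fun c => ∫ ω, (P {ω' | W ω' ≤ t * c ⬝ᵥ X ω}).toReal ∂P := by
  refine concaveOn_integral convex_positiveWeights ?_ fun c _ =>
    integrable_toReal_measure_le_comp W ((measurable_mul_dotProduct t c).comp hX)
  filter_upwards [hXpos] with ω hω
  simpa only [dotProduct_smul, smul_eq_mul] using
    hF.comp_dotProduct_of_pos (q := t • X ω) fun i => mul_pos ht (hω i)

end Ordering

theorem eaton_olshen_stochastic_ordering
    {Ω : Type*} [MeasurableSpace Ω] (P : Measure Ω) [IsProbabilityMeasure P]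
    {n : ℕ} (W : Ω → ℝ) (Q : Fin n → Ω → ℝ)
    (hW_meas : Measurable W) (hQ_meas : ∀ i, Measurable (Q i))
    -- W is a.s. positive and unimodal at 0: its cdf vanishes at 0 and is concave on (0, ∞)
    (hW_cdf0 : P {ω | W ω ≤ 0} = 0)
    (hW_unimodal : ConcaveOn ℝ (Set.Ioi 0) (fun t => (P {ω | W ω ≤ t}).toReal))
    -- the Q_i are a.s. positive
    (hQ_pos : ∀ i, ∀ᵐ ω ∂P, 0 < Q i ω)
    -- the Q_i are exchangeable
    (hQ_exch : ∀ e : Equiv.Perm (Fin n),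
      Measure.map (fun ω => fun i => Q (e i) ω) P = Measure.map (fun ω => fun i => Q i ω) P)
    -- W is independent of (Q_1, ..., Q_n)
    (hWQ_indep : IndepFun W (fun ω => fun i => Q i ω) P) :
    ∀ a b : Fin n → ℝ, (∀ i, 0 ≤ a i) → (∀ i, 0 ≤ b i) → IsMajorizedBy a b →
      ∀ t : ℝ,
        P {ω | t < W ω / ∑ i, a i * Q i ω} ≤ P {ω | t < W ω / ∑ i, b i * Q i ω} := by
  intro a b ha hb hab t
  set X : Ω → Fin n → ℝ := fun ω i => Q i ω
  show P {ω | t < W ω / a ⬝ᵥ X ω} ≤ P {ω | t < W ω / b ⬝ᵥ X ω}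
  have hX : Measurable X := measurable_pi_lambda _ hQ_meas
  have hXpos : ∀ᵐ ω ∂P, ∀ i, 0 < X ω i := ae_all_iff.2 hQ_pos
  rcases (sum_nonneg fun i _ => ha i).eq_or_lt with ha0 | ha_pos
  · rw [hab.eq_of_sum_eq_zero ha hb ha0.symm]
  have hb_pos : b ∈ positiveWeights n := ⟨hb, hab.1 ▸ ha_pos⟩
  rcases le_or_gt t 0 with ht | ht
  · have hW_pos : ∀ᵐ ω ∂P, 0 < W ω := ae_iff.2 (by simpa only [not_lt] using hW_cdf0)
    exact prob_le_one.trans_eq (measure_lt_div_dotProduct_eq_one hW_pos hXpos hb_pos ht).symm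
  rw [measure_lt_div_dotProduct_eq_one_sub_integral hW_meas hX hWQ_indep hXpos ⟨ha, ha_pos⟩,
    measure_lt_div_dotProduct_eq_one_sub_integral hW_meas hX hWQ_indep hXpos hb_pos]
  refine tsub_le_tsub_left (ENNReal.ofReal_le_ofReal ?_) 1
  have hφ := concaveOn_integral_measure_le_mul_dotProduct hW_unimodal hX hXpos ht
  refine hφ.le_of_isMajorizedBy (fun σ => ⟨fun i => hb _, ?_⟩) (fun σ => ?_) hab
  · simpa only [Function.comp_apply, Equiv.sum_comp] using hb_pos.2
  · exact integral_comp_dotProduct_comp_perm hX hQ_exch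
      ((monotone_toReal_measure_le P W).measurable.comp (measurable_const_mul t)) b σ
end

section
/- Let F be the cdf of a positive random variable unimodal at 0 (F(0)=0 and F concave on (0,∞)), and for each k let V_{k1}, ..., V_{kk} be i.i.d. with cdf F. Define h_k = P[V_{k1} >= (1/k) sum_{l=1}^k V_{kl}]. Then the sequence (h_k) is monotone non-increasing: h_{k+1} <= h_k for every k >= 1. -/
open MeasureTheory ProbabilityTheory Finset ENNReal

/-!
Write `G t = P (t ≤ V₀)`. A concave `F` is continuous on `(0, ∞)`, so there `G = 1 - F` is
convex. Conditioning on the other variables, `h (m + 1) = E[G (S / m)]` for any sum `S` of `m`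
of the variables other than `V₀`.
With `k = m + 1` and `T = V₁ + ⋯ + V_k`, the mean `T / k` is the average over `i` of the
leave-one-out means `(T - Vᵢ) / m`, so Jensen gives `G (T / k) ≤ k⁻¹ ∑ᵢ G ((T - Vᵢ) / m)`.
Taking expectations, every term on the right is `h (m + 1)` by exchangeability, so
`h (m + 2) ≤ h (m + 1)`.
-/

theorem ConvexOn.map_average_le_average_map_average_erase {ι E : Type*} [DecidableEq ι]
    [AddCommGroup E] [Module ℝ E] {D : Set E} {g : E → ℝ} (hg : ConvexOn ℝ D g)
    {s : Finset ι} {x : ι → E} (hx : ∀ i ∈ s, x i ∈ D) (hs : 1 < #s) :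
    g ((#s : ℝ)⁻¹ • ∑ i ∈ s, x i) ≤
      (#s : ℝ)⁻¹ * ∑ i ∈ s, g (((#s : ℝ) - 1)⁻¹ • ∑ j ∈ s.erase i, x j) := by
  have hs₀ : (0 : ℝ) < #s := by positivity
  have hs₁ : (0 : ℝ) < #s - 1 := sub_pos.2 (by exact_mod_cast hs)
  have hsum : ∑ i ∈ s, ∑ j ∈ s.erase i, x j = ((#s : ℝ) - 1) • ∑ i ∈ s, x i := by
    rw [sum_congr rfl fun i hi => sum_erase_eq_sub hi, sum_sub_distrib, sum_const,
      ← Nat.cast_smul_eq_nsmul ℝ, sub_smul, one_smul]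
  have hmean : (#s : ℝ)⁻¹ • ∑ i ∈ s, x i =
      ∑ i ∈ s, (#s : ℝ)⁻¹ • (((#s : ℝ) - 1)⁻¹ • ∑ j ∈ s.erase i, x j) := by
    rw [← smul_sum, ← smul_sum, hsum, smul_smul, smul_smul, mul_assoc, inv_mul_cancel₀ hs₁.ne',
      mul_one]
  have hmem : ∀ i ∈ s, ((#s : ℝ) - 1)⁻¹ • ∑ j ∈ s.erase i, x j ∈ D := by
    intro i hi
    rw [smul_sum]
    refine hg.1.sum_mem (fun _ _ => by positivity) ?_ (fun j hj => hx j (mem_of_mem_erase hj))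
    rw [sum_const, card_erase_of_mem hi, nsmul_eq_mul, Nat.cast_pred (by omega)]
    exact mul_inv_cancel₀ hs₁.ne'
  rw [hmean, mul_sum]
  refine hg.map_sum_le (fun _ _ => by positivity) ?_ hmem
  rw [sum_const, nsmul_eq_mul]
  exact mul_inv_cancel₀ hs₀.ne'

theorem ENNReal.ofReal_sum_le {ι : Type*} (s : Finset ι) (f : ι → ℝ) :
    ENNReal.ofReal (∑ i ∈ s, f i) ≤ ∑ i ∈ s, ENNReal.ofReal (f i) :=
  Finset.le_sum_of_subadditive _ ofReal_zero.le (fun _ _ => ofReal_add_le) s f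

theorem ConvexOn.ofReal_map_average_le_average_map_average_erase {ι : Type*} [DecidableEq ι]
    {g : ℝ → ℝ} (hg : ConvexOn ℝ (Set.Ioi 0) g) {G : ℝ → ℝ≥0∞}
    (hG : ∀ t, 0 < t → G t = ENNReal.ofReal (g t)) {s : Finset ι} {x : ι → ℝ}
    (hx : ∀ i ∈ s, 0 < x i) (hs : 1 < #s) :
    G ((∑ i ∈ s, x i) / #s) ≤ (#s : ℝ≥0∞)⁻¹ * ∑ i ∈ s, G ((∑ j ∈ s.erase i, x j) / (#s - 1)) := by
  have hs₀ : (0 : ℝ) < #s := by positivity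
  have hs₁ : (0 : ℝ) < #s - 1 := sub_pos.2 (by exact_mod_cast hs)
  have hpos {u : Finset ι} (hu : u ⊆ s) (hu₀ : u.Nonempty) {c : ℝ} (hc : 0 < c) :
      0 < (∑ i ∈ u, x i) / c :=
    div_pos (sum_pos (fun i hi => hx i (hu hi)) hu₀) hc
  have hloo (i : ι) (hi : i ∈ s) : 0 < (∑ j ∈ s.erase i, x j) / (#s - 1) :=
    hpos (erase_subset i s) (card_pos.1 (by rw [card_erase_of_mem hi]; omega)) hs₁
  have hreal := hg.map_average_le_average_map_average_erase hx hs
  simp only [smul_eq_mul, inv_mul_eq_div] at hreal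
  calc G ((∑ i ∈ s, x i) / #s)
      = ENNReal.ofReal (g ((∑ i ∈ s, x i) / #s)) :=
        hG _ (hpos subset_rfl (card_pos.1 (by omega)) hs₀)
    _ ≤ ENNReal.ofReal ((#s : ℝ)⁻¹ * ∑ i ∈ s, g ((∑ j ∈ s.erase i, x j) / (#s - 1))) :=
        ofReal_le_ofReal (hreal.trans_eq (div_eq_inv_mul _ _))
    _ ≤ (#s : ℝ≥0∞)⁻¹ * ∑ i ∈ s, ENNReal.ofReal (g ((∑ j ∈ s.erase i, x j) / (#s - 1))) := by
        rw [ofReal_mul (by positivity), ofReal_inv_of_pos hs₀, ofReal_natCast]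
        gcongr
        exact ofReal_sum_le _ _
    _ = (#s : ℝ≥0∞)⁻¹ * ∑ i ∈ s, G ((∑ j ∈ s.erase i, x j) / (#s - 1)) := by
        congr 1
        exact sum_congr rfl fun i hi => (hG _ (hloo i hi)).symm

theorem average_range_succ_le_iff (x : ℕ → ℝ) (n : ℕ) :
    1 / ((n + 1 : ℕ) : ℝ) * ∑ l ∈ range (n + 1), x l ≤ x 0 ↔
      ∑ l ∈ Ico 1 (n + 1), x l ≤ n * x 0 := by
  rw [sum_range_eq_add_Ico _ n.succ_pos, one_div, inv_mul_le_iff₀ (by positivity)]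
  push_cast
  constructor <;> intro h <;> linarith

theorem measure_le_eq_ofReal_one_sub {Ω : Type*} [MeasurableSpace Ω] {P : Measure Ω}
    [IsProbabilityMeasure P] {X : Ω → ℝ} (hX : Measurable X) {F : ℝ → ℝ}
    (hF : ∀ t, F t = P.real {ω | X ω ≤ t}) {t : ℝ} (hFt : ContinuousWithinAt F (Set.Iio t) t) :
    P {ω | t ≤ X ω} = ENNReal.ofReal (1 - F t) := by
  have := Measure.isProbabilityMeasure_map (μ := P) hX.aemeasurable
  have hcdf : cdf (P.map X) = F := by
    ext u
    rw [cdf_eq_real, map_measureReal_apply hX measurableSet_Iic, hF]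
    rfl
  have hleft : Function.leftLim (cdf (P.map X)) t = F t := by
    rw [(cdf (P.map X)).mono.continuousWithinAt_Iio_iff_leftLim_eq.1 (hcdf ▸ hFt), hcdf]
  calc P {ω | t ≤ X ω} = P.map X (Set.Ici t) := (Measure.map_apply hX measurableSet_Ici).symm
    _ = ENNReal.ofReal (1 - F t) := by
      rw [← measure_cdf (P.map X), (cdf _).measure_Ici (tendsto_cdf_atTop _), hleft]

theorem IndepFun.measure_le_mul_eq_lintegral {Ω : Type*} [MeasurableSpace Ω] {P : Measure Ω}
    [IsFiniteMeasure P] {X Y : Ω → ℝ} (hX : Measurable X) (hY : Measurable Y)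
    (hYX : IndepFun Y X P) {c : ℝ} (hc : 0 < c) :
    P {ω | Y ω ≤ c * X ω} = ∫⁻ ω, P {ω' | Y ω / c ≤ X ω'} ∂P := by
  have hE : MeasurableSet {p : ℝ × ℝ | p.1 ≤ c * p.2} :=
    measurableSet_le measurable_fst (measurable_snd.const_mul c)
  calc P {ω | Y ω ≤ c * X ω} = P.map (fun ω => (Y ω, X ω)) {p | p.1 ≤ c * p.2} :=
        (Measure.map_apply (hY.prodMk hX) hE).symm
    _ = ∫⁻ ω, P.map X (Prod.mk (Y ω) ⁻¹' {p | p.1 ≤ c * p.2}) ∂P := by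
        rw [hYX.map_prod_eq_prod_map_map hY.aemeasurable hX.aemeasurable,
          Measure.prod_apply hE, lintegral_map (measurable_measure_prodMk_left hE) hY]
    _ = ∫⁻ ω, P {ω' | Y ω / c ≤ X ω'} ∂P := by
        refine lintegral_congr fun ω => ?_
        rw [Measure.map_apply hX (measurable_prodMk_left hE)]
        congr! 1
        ext ω'
        simp [div_le_iff₀ hc, mul_comm]

section IID

variable {Ω ι : Type*} [MeasurableSpace Ω] {P : Measure Ω} [IsProbabilityMeasure P]
  [DecidableEq ι] {V : ι → Ω → ℝ}

theorem identDistrib_sum_of_card_eq (hV_meas : ∀ i, Measurable (V i)) (hV_indep : iIndepFun V P)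
    (hV_ident : ∀ i j, IdentDistrib (V i) (V j) P P) {u u' : Finset ι} (h : #u = #u') :
    IdentDistrib (∑ l ∈ u, V l) (∑ l ∈ u', V l) P P := by
  induction u using Finset.induction_on generalizing u' with
  | empty =>
    rw [card_eq_zero.1 (h.symm.trans card_empty)]
    exact .refl aemeasurable_const
  | insert a u ha ih =>
    obtain ⟨b, hb⟩ : u'.Nonempty := card_pos.1 (h ▸ card_pos.2 (insert_nonempty a u))
    have hpair := (hV_ident a b).prodMk (ih (u' := u'.erase b) (by
        rw [card_erase_of_mem hb, ← h, card_insert_of_notMem ha]; rfl))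
      (hV_indep.indepFun_finsetSum_of_notMem hV_meas ha).symm
      (hV_indep.indepFun_finsetSum_of_notMem hV_meas (notMem_erase b u')).symm
    rw [← insert_erase hb, sum_insert ha, sum_insert (notMem_erase b u')]
    exact hpair.comp measurable_add

theorem measure_sum_le_mul_eq_of_card_eq (hV_meas : ∀ i, Measurable (V i))
    (hV_indep : iIndepFun V P) (hV_ident : ∀ i j, IdentDistrib (V i) (V j) P P) {a : ι}
    {u u' : Finset ι} (hau : a ∉ u) (hau' : a ∉ u') (h : #u = #u') (c : ℝ) :
    P {ω | ∑ l ∈ u, V l ω ≤ c * V a ω} = P {ω | ∑ l ∈ u', V l ω ≤ c * V a ω} := by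
  have hpair := (identDistrib_sum_of_card_eq hV_meas hV_indep hV_ident h).prodMk
    (.refl (hV_meas a).aemeasurable) (hV_indep.indepFun_finsetSum_of_notMem hV_meas hau)
    (hV_indep.indepFun_finsetSum_of_notMem hV_meas hau')
  simpa [Finset.sum_apply] using hpair.measure_mem_eq
    (measurableSet_le measurable_fst (measurable_snd.const_mul c))

theorem measure_sum_le_mul_le_average (hV_meas : ∀ i, Measurable (V i))
    (hV_indep : iIndepFun V P) {a : ι} {g : ℝ → ℝ} (hg : ConvexOn ℝ (Set.Ioi 0) g)
    (hG : ∀ t, 0 < t → P {ω | t ≤ V a ω} = ENNReal.ofReal (g t)) {s : Finset ι} (has : a ∉ s)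
    (hs : 1 < #s) (hV_pos : ∀ i ∈ s, ∀ᵐ ω ∂P, 0 < V i ω) :
    P {ω | ∑ l ∈ s, V l ω ≤ #s * V a ω} ≤
      (#s : ℝ≥0∞)⁻¹ * ∑ i ∈ s, P {ω | ∑ l ∈ s.erase i, V l ω ≤ ((#s : ℝ) - 1) * V a ω} := by
  set G : ℝ → ℝ≥0∞ := fun t => P {ω | t ≤ V a ω}
  have hG_meas : Measurable G :=
    Antitone.measurable fun t t' htt' => measure_mono fun ω hω => htt'.trans hω
  have hS_meas (u : Finset ι) : Measurable fun ω => ∑ l ∈ u, V l ω :=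
    Finset.measurable_sum _ fun i _ => hV_meas i
  have hrepr (u : Finset ι) (hau : a ∉ u) {c : ℝ} (hc : 0 < c) :
      P {ω | ∑ l ∈ u, V l ω ≤ c * V a ω} = ∫⁻ ω, G ((∑ l ∈ u, V l ω) / c) ∂P := by
    refine IndepFun.measure_le_mul_eq_lintegral (hV_meas a) (hS_meas u) ?_ hc
    simpa only [sum_fn] using hV_indep.indepFun_finsetSum_of_notMem hV_meas hau
  have hs₀ : (0 : ℝ) < #s := by positivity
  have hs₁ : (0 : ℝ) < #s - 1 := sub_pos.2 (by exact_mod_cast hs)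
  have hjensen : ∀ᵐ ω ∂P, G ((∑ l ∈ s, V l ω) / #s) ≤
      (#s : ℝ≥0∞)⁻¹ * ∑ i ∈ s, G ((∑ l ∈ s.erase i, V l ω) / (#s - 1)) := by
    filter_upwards [(Filter.eventually_all_finset s).2 hV_pos] with ω hω
    exact hg.ofReal_map_average_le_average_map_average_erase hG hω hs
  calc P {ω | ∑ l ∈ s, V l ω ≤ #s * V a ω} = ∫⁻ ω, G ((∑ l ∈ s, V l ω) / #s) ∂P :=
        hrepr s has hs₀
    _ ≤ ∫⁻ ω, (#s : ℝ≥0∞)⁻¹ * ∑ i ∈ s, G ((∑ l ∈ s.erase i, V l ω) / (#s - 1)) ∂P :=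
        lintegral_mono_ae hjensen
    _ = (#s : ℝ≥0∞)⁻¹ * ∑ i ∈ s, P {ω | ∑ l ∈ s.erase i, V l ω ≤ ((#s : ℝ) - 1) * V a ω} := by
        have hterm_meas (i : ι) : Measurable fun ω => G ((∑ l ∈ s.erase i, V l ω) / (#s - 1)) :=
          hG_meas.comp ((hS_meas _).div_const _)
        rw [lintegral_const_mul _ (Finset.measurable_sum _ fun i _ => hterm_meas i),
          lintegral_finsetSum _ fun i _ => hterm_meas i]
        congr 1
        exact sum_congr rfl fun i _ => (hrepr _ (fun h => has (mem_of_mem_erase h)) hs₁).symm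

end IID

theorem maximal_depth_antitone_general
    {Ω : Type*} [MeasurableSpace Ω] (P : Measure Ω) [IsProbabilityMeasure P]
    (V : ℕ → Ω → ℝ) (hV_meas : ∀ i, Measurable (V i))
    (hV_indep : iIndepFun V P)
    (hV_ident : ∀ i j, IdentDistrib (V i) (V j) P P)
    (hV_pos : ∀ i, ∀ᵐ ω ∂P, 0 < V i ω)
    (F : ℝ → ℝ) (hF_cdf : ∀ i t, F t = (P {ω | V i ω ≤ t}).toReal)
    (hF_conc : ConcaveOn ℝ (Set.Ioi 0) F)
    (h : ℕ → ℝ≥0∞)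
    (hh : ∀ j, h j = P {ω | (1 / (j : ℝ)) * ∑ l ∈ Finset.range j, V l ω ≤ V 0 ω}) :
    ∀ j, 1 ≤ j → h (j + 1) ≤ h j := by
  have hh' (n : ℕ) : h (n + 1) = P {ω | ∑ l ∈ Ico 1 (n + 1), V l ω ≤ n * V 0 ω} := by
    rw [hh]
    exact congrArg P (Set.ext fun ω => average_range_succ_le_iff (V · ω) n)
  have hG (t : ℝ) (ht : 0 < t) : P {ω | t ≤ V 0 ω} = ENNReal.ofReal (1 - F t) :=
    measure_le_eq_ofReal_one_sub (hV_meas 0) (hF_cdf 0)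
      ((hF_conc.continuousOn isOpen_Ioi).continuousAt (Ioi_mem_nhds ht)).continuousWithinAt
  rintro j hj
  obtain ⟨n, rfl⟩ : ∃ n, j = n + 1 := ⟨j - 1, by omega⟩
  rcases n.eq_zero_or_pos with rfl | hn
  · rw [hh' 0, hh]
    simp [prob_le_one]
  set s := Ico 1 (n + 2)
  have hs : #s = n + 1 := by simp [s]
  have h0s : 0 ∉ s := by simp [s]
  calc h (n + 1 + 1) = P {ω | ∑ l ∈ s, V l ω ≤ #s * V 0 ω} := by rw [hh' (n + 1), hs]
    _ ≤ (#s : ℝ≥0∞)⁻¹ * ∑ i ∈ s, P {ω | ∑ l ∈ s.erase i, V l ω ≤ ((#s : ℝ) - 1) * V 0 ω} :=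
      measure_sum_le_mul_le_average hV_meas hV_indep
        ((convexOn_const 1 (convex_Ioi 0)).sub hF_conc) hG h0s (by omega) fun i _ => hV_pos i
    _ = (#s : ℝ≥0∞)⁻¹ * ∑ i ∈ s, h (n + 1) := by
      refine congrArg _ (sum_congr rfl fun i hi => ?_)
      rw [hh', hs, Nat.cast_add_one, add_sub_cancel_right]
      exact measure_sum_le_mul_eq_of_card_eq hV_meas hV_indep hV_ident
        (fun hi' => h0s (mem_of_mem_erase hi')) (by simp) (by simp [card_erase_of_mem hi, hs]) _
    _ = h (n + 1) := by
      rw [sum_const, nsmul_eq_mul, ← mul_assoc,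
        ENNReal.inv_mul_cancel (by simp [hs]) (natCast_ne_top _), one_mul]

theorem maximal_depth_antitone
    {Ω : Type*} [MeasurableSpace Ω] (P : Measure Ω) [IsProbabilityMeasure P]
    (V : ℕ → Ω → ℝ) (hV_meas : ∀ i, Measurable (V i))
    (hV_indep : iIndepFun V P)
    (hV_ident : ∀ i j, IdentDistrib (V i) (V j) P P)
    (hV_pos : ∀ i, ∀ᵐ ω ∂P, 0 < V i ω)
    (F : ℝ → ℝ) (hF_cdf : ∀ i t, F t = (P {ω | V i ω ≤ t}).toReal)
    (hF0 : F 0 = 0) (hF_conc : ConcaveOn ℝ (Set.Ioi 0) F)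
    (h : ℕ → ℝ≥0∞)
    (hh : ∀ j, h j = P {ω | (1 / (j : ℝ)) * ∑ l ∈ Finset.range j, V l ω ≤ V 0 ω}) :
    ∀ j, 1 ≤ j → h (j + 1) ≤ h j :=
  maximal_depth_antitone_general P V hV_meas hV_indep hV_ident hV_pos F hF_cdf hF_conc h hh
end

section
/- Let V_1, V_2, ... be i.i.d. positive integrable random variables with continuous cdf F, and set h_k = P[V_1 >= (1/k) sum_{l=1}^k V_l]. Then h_k converges as k → ∞ to h_∞ = P[V_1 >= E[V_1]]. -/
/-! By the strong law of large numbers the empirical means converge almost surely to `E[V₀]`.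
Off the null event `{V₀ = E[V₀]}`, the indicator of `{mean ≤ V₀}` is therefore eventually the
indicator of `{E[V₀] ≤ V₀}`, and dominated convergence turns this into convergence of the
probabilities. -/

open MeasureTheory ProbabilityTheory Finset ENNReal Filter Topology

theorem Filter.Tendsto.eventually_le_iff_le {ι α : Type*} [LinearOrder α] [TopologicalSpace α]
    [OrderTopology α] {l : Filter ι} {f : ι → α} {c x : α} (hf : Tendsto f l (𝓝 c))
    (hx : x ≠ c) : ∀ᶠ n in l, f n ≤ x ↔ c ≤ x := by
  rcases hx.lt_or_gt with hxc | hcx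
  · filter_upwards [hf.eventually_const_lt hxc] with n hn
    exact iff_of_false hn.not_ge hxc.not_ge
  · filter_upwards [hf.eventually_lt_const hcx] with n hn
    exact iff_of_true hn.le hcx.le

theorem tendsto_measure_le_of_ae_tendsto {Ω : Type*} [MeasurableSpace Ω] {P : Measure Ω}
    [IsFiniteMeasure P] {f : ℕ → Ω → ℝ} {X : Ω → ℝ} {c : ℝ} (hf : ∀ n, Measurable (f n))
    (hX : Measurable X) (hlim : ∀ᵐ ω ∂P, Tendsto (fun n ↦ f n ω) atTop (𝓝 c))
    (hc : P {ω | X ω = c} = 0) :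
    Tendsto (fun n ↦ P {ω | f n ω ≤ X ω}) atTop (𝓝 (P {ω | c ≤ X ω})) := by
  have hne : ∀ᵐ ω ∂P, X ω ≠ c := measure_eq_zero_iff_ae_notMem.mp hc
  refine tendsto_measure_of_ae_tendsto_indicator_of_isFiniteMeasure atTop
    (measurableSet_le measurable_const hX) (fun n ↦ measurableSet_le (hf n) hX) ?_
  filter_upwards [hlim, hne] with ω hω hωc
  exact hω.eventually_le_iff_le hωc

theorem maximal_depth_tendsto_general
    {Ω : Type*} [MeasurableSpace Ω] (P : Measure Ω) [IsProbabilityMeasure P]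
    (V : ℕ → Ω → ℝ) (hV_meas : ∀ i, Measurable (V i))
    (hV_indep : iIndepFun V P)
    (hV_ident : ∀ i j, IdentDistrib (V i) (V j) P P)
    (hV_int : Integrable (V 0) P)
    -- the common cdf is continuous, i.e. there are no atoms
    (hV_cont : ∀ t : ℝ, P {ω | V 0 ω = t} = 0) :
    Filter.Tendsto
      (fun j : ℕ => (P {ω | (1 / (j : ℝ)) * ∑ l ∈ Finset.range j, V l ω ≤ V 0 ω}).toReal)
      Filter.atTop
      (nhds ((P {ω | ∫ x, V 0 x ∂P ≤ V 0 ω}).toReal)) := by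
  have hslln := strong_law_ae V hV_int (fun _ _ hij ↦ hV_indep.indepFun hij)
    (fun i ↦ hV_ident i 0)
  simp only [smul_eq_mul, ← one_div] at hslln
  have hmean_meas (j : ℕ) : Measurable fun ω ↦ (1 / (j : ℝ)) * ∑ l ∈ range j, V l ω :=
    (Finset.measurable_sum _ fun l _ ↦ hV_meas l).const_mul _
  exact (ENNReal.tendsto_toReal (measure_ne_top P _)).comp
    (tendsto_measure_le_of_ae_tendsto hmean_meas (hV_meas 0) hslln (hV_cont _))

theorem maximal_depth_tendsto
    {Ω : Type*} [MeasurableSpace Ω] (P : Measure Ω) [IsProbabilityMeasure P]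
    (V : ℕ → Ω → ℝ) (hV_meas : ∀ i, Measurable (V i))
    (hV_indep : iIndepFun V P)
    (hV_ident : ∀ i j, IdentDistrib (V i) (V j) P P)
    (hV_pos : ∀ i, ∀ᵐ ω ∂P, 0 < V i ω)
    (hV_int : Integrable (V 0) P)
    -- the common cdf is continuous, i.e. there are no atoms
    (hV_cont : ∀ t : ℝ, P {ω | V 0 ω = t} = 0) :
    Filter.Tendsto
      (fun j : ℕ => (P {ω | (1 / (j : ℝ)) * ∑ l ∈ Finset.range j, V l ω ≤ V 0 ω}).toReal)
      Filter.atTop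
      (nhds ((P {ω | ∫ x, V 0 x ∂P ≤ V 0 ω}).toReal)) :=
  maximal_depth_tendsto_general P V hV_meas hV_indep hV_ident hV_int hV_cont
end

section
/- Let F be the cdf of a positive random variable unimodal at 0, and let V_1, ..., V_k be i.i.d. with cdf F. For any integer m with 1 <= m <= k-1 and any nonnegative weights d_{m+1}, ..., d_k summing to 1, P[V_m >= sum_{l=m+1}^k d_l V_l] >= P[V_m >= (1/(k-m)) sum_{l=m+1}^k V_l]. -/
open MeasureTheory ProbabilityTheory Finset ENNReal

/-!
Let `G x = P[V ≥ x]` be the survival function and `W_c = ∑ c_l V_l`. By independence,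
`P[W_c ≤ V_m] = E[G(W_c)]`. A cdf that is concave on `(0, ∞)` is continuous there, so
`G = 1 - F` is convex on `(0, ∞)`, where all the `W_c` live. Since the `V_l` are i.i.d.,
`E[G(W_c)]` does not change when the weights are permuted. The uniform weight vector is the
average of the cyclic shifts of `c`, so Jensen's inequality gives
`E[G(W_uniform)] ≤ average of E[G(W_shifted c)] = E[G(W_c)]`.
-/

theorem ProbabilityTheory.IndepFun.measure_comp_le_eq_lintegral {Ω β : Type*}
    [MeasurableSpace Ω] [MeasurableSpace β] {P : Measure Ω} [IsFiniteMeasure P] {U : Ω → β}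
    {Y : Ω → ℝ} (hU : Measurable U) (hY : Measurable Y) (h : IndepFun U Y P) {φ : β → ℝ}
    (hφ : Measurable φ) :
    P {ω | φ (U ω) ≤ Y ω} = ∫⁻ u, P.map Y (Set.Ici (φ u)) ∂P.map U := by
  have hS : MeasurableSet {p : β × ℝ | φ p.1 ≤ p.2} :=
    measurableSet_le (hφ.comp measurable_fst) measurable_snd
  have hprod := (indepFun_iff_map_prod_eq_prod_map_map hU.aemeasurable hY.aemeasurable).1 h
  calc P {ω | φ (U ω) ≤ Y ω} = P.map (fun ω => (U ω, Y ω)) {p | φ p.1 ≤ p.2} := by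
        rw [Measure.map_apply (hU.prodMk hY) hS]; rfl
    _ = ∫⁻ u, P.map Y (Set.Ici (φ u)) ∂P.map U := by
        rw [hprod, Measure.prod_apply hS]; rfl

theorem measure_sum_mul_le_eq_lintegral_pi {Ω ι : Type*} [MeasurableSpace Ω] {P : Measure Ω}
    [IsProbabilityMeasure P] {V : ι → Ω → ℝ} (hV_meas : ∀ i, Measurable (V i))
    (hV_indep : iIndepFun V P) {μ : Measure ℝ} (hμ : ∀ i, P.map (V i) = μ) {s : Finset ι}
    {i : ι} (hi : i ∉ s) (c : ι → ℝ) :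
    P {ω | ∑ l ∈ s, c l * V l ω ≤ V i ω} =
      ∫⁻ x : s → ℝ, μ (Set.Ici (∑ l : s, c l * x l)) ∂Measure.pi (fun _ => μ) := by
  let U : Ω → s → ℝ := fun ω l => V l ω
  have hU : Measurable U := measurable_pi_lambda _ fun l => hV_meas l
  have hlaw : P.map U = Measure.pi fun _ => μ := by
    rw [(hV_indep.precomp Subtype.val_injective).map_fun_eq_pi_map (f := fun l : s => V l)
      fun l => (hV_meas l).aemeasurable]
    simp only [hμ]
  have hindep : IndepFun U (V i) P :=
    (hV_indep.indepFun_finset s {i} (disjoint_singleton_right.2 hi) hV_meas).comp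
      measurable_id (measurable_pi_apply (⟨i, mem_singleton_self i⟩ : ({i} : Finset ι)))
  have := hindep.measure_comp_le_eq_lintegral hU (hV_meas i)
    (φ := fun x => ∑ l : s, c l * x l) (by fun_prop)
  rw [hlaw, hμ] at this
  rw [← this]
  congr with ω
  rw [← sum_coe_sort s]

theorem convexOn_toReal_measure_Ici (ν : Measure ℝ) [IsProbabilityMeasure ν] {s : Set ℝ}
    (hs : IsOpen s) (h : ConcaveOn ℝ s (cdf ν)) :
    ConvexOn ℝ s fun x => (ν (Set.Ici x)).toReal := by
  refine (h.neg.add_const 1).congr fun x hx => ?_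
  have hleft : Function.leftLim (cdf ν) x = cdf ν x := leftLim_eq_of_tendsto <|
    ((h.continuousOn hs).continuousAt (hs.mem_nhds hx)).tendsto.mono_left nhdsWithin_le_nhds
  have hIci := (cdf ν).measure_Ici (tendsto_cdf_atTop ν) x
  rw [measure_cdf, hleft] at hIci
  rw [hIci, ENNReal.toReal_ofReal (sub_nonneg.2 (cdf_le_one ν x))]
  simp only [Pi.add_apply, Pi.neg_apply]
  ring

theorem lintegral_comp_sum_mul_equiv {ι ι' : Type*} [Fintype ι] [Fintype ι'] (ν : Measure ℝ)
    [SigmaFinite ν] (g : ℝ → ℝ≥0∞) (c : ι → ℝ) (e : ι' ≃ ι) :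
    ∫⁻ x, g (∑ j, c (e j) * x j) ∂Measure.pi (fun _ : ι' => ν) =
      ∫⁻ x, g (∑ j, c j * x j) ∂Measure.pi (fun _ : ι => ν) := by
  rw [← (measurePreserving_piCongrLeft (fun _ : ι => ν) e).lintegral_comp_emb
    (MeasurableEquiv.measurableEmbedding _)]
  congr with x
  rw [← e.sum_comp]
  simp [MeasurableEquiv.piCongrLeft_apply_apply]

theorem apply_mean_le_mean_apply_of_convexOn_toReal {ι : Type*} [Fintype ι] [Nonempty ι]
    {s : Set ℝ} {g : ℝ → ℝ≥0∞} (hg : ConvexOn ℝ s fun x => (g x).toReal)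
    (hg_top : ∀ x, g x ≠ ∞) {p : ι → ℝ} (hp : ∀ i, p i ∈ s) :
    g ((Fintype.card ι : ℝ)⁻¹ * ∑ i, p i) ≤ (Fintype.card ι : ℝ≥0∞)⁻¹ * ∑ i, g (p i) := by
  have hcard : (0 : ℝ) < Fintype.card ι := Nat.cast_pos.2 Fintype.card_pos
  have hJ := hg.map_sum_le (t := univ) (w := fun _ => (Fintype.card ι : ℝ)⁻¹) (p := p)
    (fun _ _ => by positivity) (by simp [hcard.ne']) (fun i _ => hp i)
  simp only [smul_eq_mul, ← mul_sum] at hJ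
  rw [← ofReal_toReal (hg_top _), ← ofReal_natCast, ← ofReal_inv_of_pos hcard,
    ← ofReal_toReal (a := ∑ i, g (p i)) (by simp [hg_top]), ← ofReal_mul (by positivity),
    toReal_sum (fun i _ => hg_top _)]
  exact ofReal_le_ofReal hJ

theorem sum_eq_sum_sum_shift_mul {n : ℕ} [NeZero n] {c : Fin n → ℝ} (hc : ∑ j, c j = 1)
    (x : Fin n → ℝ) : ∑ j, x j = ∑ i, ∑ j, c (i + j) * x j := by
  rw [sum_comm]
  refine sum_congr rfl fun j _ => ?_
  rw [← sum_mul, Fintype.sum_equiv (Equiv.addRight j) (fun i => c (i + j)) c fun _ => rfl, hc,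
    one_mul]

theorem lintegral_comp_mean_le_of_convexOn_fin {n : ℕ} (ν : Measure ℝ) [SigmaFinite ν]
    (hν : ∀ᵐ x ∂ν, 0 < x) {g : ℝ → ℝ≥0∞} (hg_meas : Measurable g) (hg_top : ∀ x, g x ≠ ∞)
    (hg : ConvexOn ℝ (Set.Ioi 0) fun x => (g x).toReal) {c : Fin n → ℝ} (hc0 : ∀ j, 0 ≤ c j)
    (hc1 : ∑ j, c j = 1) :
    ∫⁻ x : Fin n → ℝ, g (∑ j, (n : ℝ)⁻¹ * x j) ∂Measure.pi (fun _ => ν) ≤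
      ∫⁻ x, g (∑ j, c j * x j) ∂Measure.pi (fun _ => ν) := by
  have : NeZero n := ⟨by rintro rfl; simp at hc1⟩
  set I := ∫⁻ x : Fin n → ℝ, g (∑ j, c j * x j) ∂Measure.pi (fun _ => ν)
  have hshift : ∀ i : Fin n,
      ∫⁻ x, g (∑ j, c (i + j) * x j) ∂Measure.pi (fun _ => ν) = I :=
    fun i => lintegral_comp_sum_mul_equiv ν g c (Equiv.addLeft i)
  have hpos : ∀ᵐ x ∂Measure.pi (fun _ : Fin n => ν), ∀ j, 0 < x j :=
    Filter.eventually_all.2 fun _ => Measure.tendsto_eval_ae_ae.eventually hν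
  have hjensen : ∀ᵐ x ∂Measure.pi (fun _ : Fin n => ν), g (∑ j, (n : ℝ)⁻¹ * x j) ≤
      (n : ℝ≥0∞)⁻¹ * ∑ i, g (∑ j, c (i + j) * x j) := by
    filter_upwards [hpos] with x hx
    have hmem : ∀ i : Fin n, ∑ j, c (i + j) * x j ∈ Set.Ioi 0 := fun i => by
      have hci : ∑ _j : Fin n, (0 : ℝ) < ∑ j, c (i + j) := by
        rw [Fintype.sum_equiv (Equiv.addLeft i) (fun j => c (i + j)) c fun _ => rfl, hc1]; simp
      obtain ⟨j, -, hj⟩ := exists_lt_of_sum_lt hci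
      exact sum_pos' (fun j _ => mul_nonneg (hc0 _) (hx j).le) ⟨j, mem_univ _, mul_pos hj (hx j)⟩
    simpa [← mul_sum, ← sum_eq_sum_sum_shift_mul hc1] using
      apply_mean_le_mean_apply_of_convexOn_toReal hg hg_top hmem
  calc ∫⁻ x, g (∑ j, (n : ℝ)⁻¹ * x j) ∂Measure.pi (fun _ => ν)
      ≤ ∫⁻ x, (n : ℝ≥0∞)⁻¹ * ∑ i, g (∑ j, c (i + j) * x j) ∂Measure.pi (fun _ => ν) :=
        lintegral_mono_ae hjensen
    _ = (n : ℝ≥0∞)⁻¹ * ∑ i : Fin n, I := by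
        rw [lintegral_const_mul' _ _ (by simp [NeZero.ne n]),
          lintegral_finsetSum _ fun i _ => ?_]
        · simp only [hshift]
        · fun_prop
    _ = I := by
        rw [sum_const, card_univ, Fintype.card_fin, nsmul_eq_mul, ← mul_assoc,
          ENNReal.inv_mul_cancel (Nat.cast_ne_zero.2 (NeZero.ne n)) (by simp), one_mul]

theorem lintegral_comp_mean_le_of_convexOn {ι : Type*} [Fintype ι] (ν : Measure ℝ)
    [SigmaFinite ν] (hν : ∀ᵐ x ∂ν, 0 < x) {g : ℝ → ℝ≥0∞} (hg_meas : Measurable g)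
    (hg_top : ∀ x, g x ≠ ∞) (hg : ConvexOn ℝ (Set.Ioi 0) fun x => (g x).toReal) {c : ι → ℝ}
    (hc0 : ∀ j, 0 ≤ c j) (hc1 : ∑ j, c j = 1) :
    ∫⁻ x : ι → ℝ, g (∑ j, (Fintype.card ι : ℝ)⁻¹ * x j) ∂Measure.pi (fun _ => ν) ≤
      ∫⁻ x, g (∑ j, c j * x j) ∂Measure.pi (fun _ => ν) := by
  let e := (Fintype.equivFin ι).symm
  calc ∫⁻ x : ι → ℝ, g (∑ j, (Fintype.card ι : ℝ)⁻¹ * x j) ∂Measure.pi (fun _ => ν)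
      = ∫⁻ x, g (∑ j, (Fintype.card ι : ℝ)⁻¹ * x j) ∂Measure.pi (fun _ => ν) :=
        (lintegral_comp_sum_mul_equiv ν g (fun _ => _) e).symm
    _ ≤ ∫⁻ x, g (∑ j, c (e j) * x j) ∂Measure.pi (fun _ => ν) :=
        lintegral_comp_mean_le_of_convexOn_fin ν hν hg_meas hg_top hg (fun j => hc0 (e j))
          (by rw [e.sum_comp, hc1])
    _ = ∫⁻ x, g (∑ j, c j * x j) ∂Measure.pi (fun _ => ν) :=
        lintegral_comp_sum_mul_equiv ν g c e

theorem weighted_sum_prob_ge_uniform_general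
    {Ω : Type*} [MeasurableSpace Ω] (P : Measure Ω) [IsProbabilityMeasure P]
    (V : ℕ → Ω → ℝ) (hV_meas : ∀ i, Measurable (V i))
    (hV_indep : iIndepFun V P)
    (hV_ident : ∀ i j, IdentDistrib (V i) (V j) P P)
    (hV_pos : ∀ i, ∀ᵐ ω ∂P, 0 < V i ω)
    (F : ℝ → ℝ) (hF_cdf : ∀ i t, F t = (P {ω | V i ω ≤ t}).toReal)
    (hF_conc : ConcaveOn ℝ (Set.Ioi 0) F)
    (k m : ℕ)
    (d : ℕ → ℝ) (hd_nonneg : ∀ l ∈ Finset.Icc (m + 1) k, 0 ≤ d l)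
    (hd_sum : ∑ l ∈ Finset.Icc (m + 1) k, d l = 1) :
    P {ω | ∑ l ∈ Finset.Icc (m + 1) k, (((k : ℝ) - m))⁻¹ * V l ω ≤ V m ω} ≤
      P {ω | ∑ l ∈ Finset.Icc (m + 1) k, d l * V l ω ≤ V m ω} := by
  set s := Icc (m + 1) k
  set μ := P.map (V m)
  have : IsProbabilityMeasure μ := Measure.isProbabilityMeasure_map (hV_meas m).aemeasurable
  have hμ : ∀ i, P.map (V i) = μ := fun i => (hV_ident i m).map_eq
  have hμ_pos : ∀ᵐ x ∂μ, 0 < x :=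
    (ae_map_iff (hV_meas m).aemeasurable measurableSet_Ioi).2 (hV_pos m)
  have hcdf : ⇑(cdf μ) = F := funext fun t => by
    rw [cdf_eq_real, measureReal_def, hF_cdf m t, Measure.map_apply (hV_meas m) measurableSet_Iic]
    rfl
  have hcard : ((k : ℝ) - m)⁻¹ = (Fintype.card s : ℝ)⁻¹ := by
    have hmk : m + 1 ≤ k := nonempty_Icc.1 (nonempty_of_sum_ne_zero (by rw [hd_sum]; norm_num))
    rw [Fintype.card_coe, Nat.card_Icc, Nat.cast_sub (by omega)]
    push_cast
    ring
  have hms : m ∉ s := by simp [s]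
  rw [measure_sum_mul_le_eq_lintegral_pi hV_meas hV_indep hμ hms,
    measure_sum_mul_le_eq_lintegral_pi hV_meas hV_indep hμ hms, hcard]
  exact lintegral_comp_mean_le_of_convexOn μ hμ_pos
    (Antitone.measurable fun _ _ hxy => measure_mono (Set.Ici_subset_Ici.2 hxy))
    (fun _ => measure_ne_top _ _) (convexOn_toReal_measure_Ici μ isOpen_Ioi (hcdf ▸ hF_conc))
    (c := fun l : s => d l) (fun l => hd_nonneg l l.2) (by rwa [sum_coe_sort])

theorem weighted_sum_prob_ge_uniform
    {Ω : Type*} [MeasurableSpace Ω] (P : Measure Ω) [IsProbabilityMeasure P]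
    (V : ℕ → Ω → ℝ) (hV_meas : ∀ i, Measurable (V i))
    (hV_indep : iIndepFun V P)
    (hV_ident : ∀ i j, IdentDistrib (V i) (V j) P P)
    (hV_pos : ∀ i, ∀ᵐ ω ∂P, 0 < V i ω)
    (F : ℝ → ℝ) (hF_cdf : ∀ i t, F t = (P {ω | V i ω ≤ t}).toReal)
    (hF0 : F 0 = 0) (hF_conc : ConcaveOn ℝ (Set.Ioi 0) F)
    (k m : ℕ) (hm1 : 1 ≤ m) (hm2 : m ≤ k - 1)
    (d : ℕ → ℝ) (hd_nonneg : ∀ l ∈ Finset.Icc (m + 1) k, 0 ≤ d l)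
    (hd_sum : ∑ l ∈ Finset.Icc (m + 1) k, d l = 1) :
    P {ω | ∑ l ∈ Finset.Icc (m + 1) k, (((k : ℝ) - m))⁻¹ * V l ω ≤ V m ω} ≤
      P {ω | ∑ l ∈ Finset.Icc (m + 1) k, d l * V l ω ≤ V m ω} :=
  weighted_sum_prob_ge_uniform_general P V hV_meas hV_indep hV_ident hV_pos F hF_cdf hF_conc k m d
    hd_nonneg hd_sum
end
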